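/- arXiv:1703.08589 — 2 statements merged into one kernel-verified Lean document; each statement's English description precedes it below -/
import Mathlib

section
/- With R, δ_k, and R̄ defined as in the trace-modification construction, the function F(A) = A^H R̄_{|A|} A on unimodular strings has the diminishing-returns property: if B is a prefix of A with |A| ≤ N−1, then for every u ∈ ℂ with |u| = 1, F(B ⊕ (u)) − F(B) ≥ F(A ⊕ (u)) − F(A), where ⊕ denotes string concatenation. -/
open Matrix

/-- `delta R k = Σ_{i<k} |r_{k i}|` (so `delta R 0 = 0`). -/
noncomputable def delta {N : ℕ} (R : Matrix (Fin N) (Fin N) ℂ) (k : Fin N) : ℝ :=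
  ∑ i ∈ Finset.Iio k, ‖R k i‖

/-- The modified diagonal entries `a_k = 2 δ_k + 4 Σ_{j>k} δ_j` (for the last index the
second sum is empty, giving `a_N = 2 δ_N`). -/
noncomputable def adiag {N : ℕ} (R : Matrix (Fin N) (Fin N) ℂ) (k : Fin N) : ℝ :=
  2 * delta R k + 4 * ∑ j ∈ Finset.Ioi k, delta R j

/-- `R̄`: same off-diagonal entries as `R`, with diagonal replaced by `a`. -/
noncomputable def Rbar {N : ℕ} (R : Matrix (Fin N) (Fin N) ℂ) : Matrix (Fin N) (Fin N) ℂ :=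
  fun i j => if i = j then (adiag R i : ℂ) else R i j

/-- `F m b = Cᴴ R̄_m C` where `C` is the prefix of length `m` of the string `b` and
`R̄_m` is the leading `m × m` principal submatrix of `R̄`. -/
noncomputable def Fval {N : ℕ} (R : Matrix (Fin N) (Fin N) ℂ) (m : ℕ) (hm : m ≤ N)
    (b : Fin N → ℂ) : ℝ :=
  (star (fun i : Fin m => b (Fin.castLE hm i)) ⬝ᵥ
      ((Rbar R).submatrix (Fin.castLE hm) (Fin.castLE hm)) *ᵥ
        fun i : Fin m => b (Fin.castLE hm i)).re

/-!
Appending a unimodular `u` to a unimodular string `b` of length `m` raises `F` by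
`a_m + 2 Re(ū Σ_{j<m} r_{mj} b_j)`, which lies within `2 δ_m` of `a_m`. The diagonal of `R̄`
is chosen so that these windows are ordered: for `k < l`,
`a_l + 2 δ_l = 4 Σ_{j ≥ l} δ_j ≤ 4 Σ_{j > k} δ_j = a_k - 2 δ_k`,
so every gain at position `k` dominates every gain at position `l`.
-/

theorem isHermitian_Rbar {N : ℕ} {R : Matrix (Fin N) (Fin N) ℂ}
    (hR : R.IsHermitian) : (Rbar R).IsHermitian := by
  ext i j
  by_cases h : i = j
  · subst h; simp [Rbar]
  · simp only [conjTranspose_apply, Rbar, if_neg h, if_neg (Ne.symm h), hR.apply]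

theorem Matrix.IsHermitian.re_star_dotProduct_mulVec_succ {𝕜 : Type*} [RCLike 𝕜] {m : ℕ}
    {M : Matrix (Fin (m + 1)) (Fin (m + 1)) 𝕜} (hM : M.IsHermitian) (v : Fin (m + 1) → 𝕜) :
    RCLike.re (star v ⬝ᵥ M *ᵥ v) =
      RCLike.re (star (v ∘ Fin.castSucc) ⬝ᵥ
          M.submatrix Fin.castSucc Fin.castSucc *ᵥ (v ∘ Fin.castSucc)) +
        RCLike.re (star (v (Fin.last m)) * (M (Fin.last m) (Fin.last m) * v (Fin.last m))) +
        2 * RCLike.re (star (v (Fin.last m)) *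
          ∑ j : Fin m, M (Fin.last m) j.castSucc * v j.castSucc) := by
  have hcol : ∑ j : Fin m, star (v j.castSucc) * (M j.castSucc (Fin.last m) * v (Fin.last m)) =
      star (star (v (Fin.last m)) * ∑ j : Fin m, M (Fin.last m) j.castSucc * v j.castSucc) := by
    simp only [star_mul, star_sum, star_star, Finset.sum_mul, hM.apply]
    exact Finset.sum_congr rfl fun j _ => by ring
  simp only [dotProduct, mulVec, Fin.sum_univ_castSucc, Pi.star_apply, submatrix_apply,
    Function.comp_apply, mul_add, Finset.sum_add_distrib, map_add]
  rw [hcol, RCLike.star_def, RCLike.conj_re]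
  ring

theorem Fval_succ {N : ℕ} {R : Matrix (Fin N) (Fin N) ℂ} (hR : R.IsHermitian) {m : ℕ}
    (h : m < N) (b : Fin N → ℂ) :
    Fval R (m + 1) h b = Fval R m h.le b + adiag R ⟨m, h⟩ * ‖b ⟨m, h⟩‖ ^ 2 +
      2 * (star (b ⟨m, h⟩) * ∑ j : Fin m, R ⟨m, h⟩ (j.castLE h.le) * b (j.castLE h.le)).re := by
  have hlast : (Fin.last m).castLE h = ⟨m, h⟩ := rfl
  have hne (j : Fin m) : (⟨m, h⟩ : Fin N) ≠ j.castLE h.le := Fin.ne_of_val_ne j.isLt.ne'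
  have hdiag : (star (b ⟨m, h⟩) * ((adiag R ⟨m, h⟩ : ℂ) * b ⟨m, h⟩)).re =
      adiag R ⟨m, h⟩ * ‖b ⟨m, h⟩‖ ^ 2 := by
    rw [mul_left_comm, RCLike.star_def, Complex.conj_mul', ← Complex.ofReal_pow,
      ← Complex.ofReal_mul, Complex.ofReal_re]
  refine (((isHermitian_Rbar hR).submatrix (Fin.castLE h)).re_star_dotProduct_mulVec_succ
    (fun i => b (i.castLE h))).trans ?_
  simp only [RCLike.re_to_complex, submatrix_apply, Fin.castLE_castSucc, hlast, Rbar, hne,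
    if_true, if_false, hdiag]
  rfl

theorem Fval_congr {N : ℕ} (R : Matrix (Fin N) (Fin N) ℂ) {m : ℕ} (hm : m ≤ N)
    {b b' : Fin N → ℂ} (h : ∀ i : Fin N, (i : ℕ) < m → b i = b' i) :
    Fval R m hm b = Fval R m hm b' := by
  have hprefix : (fun i : Fin m => b (i.castLE hm)) = fun i => b' (i.castLE hm) :=
    funext fun i => h _ i.isLt
  rw [Fval, hprefix, Fval]

theorem delta_eq_sum_castLE {N : ℕ} (R : Matrix (Fin N) (Fin N) ℂ) {m : ℕ} (h : m < N) :
    delta R ⟨m, h⟩ = ∑ j : Fin m, ‖R ⟨m, h⟩ (j.castLE h.le)‖ := by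
  rw [delta, show (⟨m, h⟩ : Fin N) = (Fin.last m).castLE h from rfl, Fin.sum_Iio_castLE,
    Fin.Iio_last_eq_map, Finset.sum_map]
  rfl

theorem abs_re_star_mul_sum_le_delta {N : ℕ} (R : Matrix (Fin N) (Fin N) ℂ) {m : ℕ} (h : m < N)
    {b : Fin N → ℂ} (hb : ∀ i : Fin N, (i : ℕ) < m → ‖b i‖ = 1) {u : ℂ} (hu : ‖u‖ = 1) :
    |(star u * ∑ j : Fin m, R ⟨m, h⟩ (j.castLE h.le) * b (j.castLE h.le)).re| ≤
      delta R ⟨m, h⟩ :=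
  calc _ ≤ ‖star u * ∑ j : Fin m, R ⟨m, h⟩ (j.castLE h.le) * b (j.castLE h.le)‖ :=
        Complex.abs_re_le_norm _
    _ ≤ ∑ j : Fin m, ‖R ⟨m, h⟩ (j.castLE h.le) * b (j.castLE h.le)‖ := by
        rw [norm_mul, norm_star, hu, one_mul]
        exact norm_sum_le _ _
    _ = delta R ⟨m, h⟩ := by
        rw [delta_eq_sum_castLE]
        exact Finset.sum_congr rfl fun j _ => by rw [norm_mul, hb _ j.isLt, mul_one]

theorem abs_Fval_update_sub_sub_adiag_le {N : ℕ} {R : Matrix (Fin N) (Fin N) ℂ}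
    (hR : R.IsHermitian) {m : ℕ} (h : m < N) {b : Fin N → ℂ}
    (hb : ∀ i : Fin N, (i : ℕ) < m → ‖b i‖ = 1) {u : ℂ} (hu : ‖u‖ = 1) :
    |Fval R (m + 1) h (Function.update b ⟨m, h⟩ u) - Fval R m h.le b - adiag R ⟨m, h⟩| ≤
      2 * delta R ⟨m, h⟩ := by
  have hprefix (i : Fin N) (hi : (i : ℕ) < m) : Function.update b ⟨m, h⟩ u i = b i :=
    Function.update_of_ne (Fin.ne_of_val_ne hi.ne) _ _
  have hsum : ∑ j : Fin m, R ⟨m, h⟩ (j.castLE h.le) * Function.update b ⟨m, h⟩ u (j.castLE h.le) =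
      ∑ j : Fin m, R ⟨m, h⟩ (j.castLE h.le) * b (j.castLE h.le) :=
    Finset.sum_congr rfl fun j _ => by rw [hprefix _ j.isLt]
  rw [Fval_succ hR, Fval_congr R h.le hprefix, Function.update_self, hu, hsum, one_pow, mul_one,
    show ∀ F a x : ℝ, F + a + x - F - a = x by intros; ring, abs_mul, abs_two]
  exact mul_le_mul_of_nonneg_left (abs_re_star_mul_sum_le_delta R h hb hu) zero_le_two

theorem adiag_add_two_mul_delta_le {N : ℕ} (R : Matrix (Fin N) (Fin N) ℂ) {k l : Fin N}
    (hkl : k < l) : adiag R l + 2 * delta R l ≤ adiag R k - 2 * delta R k := by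
  have hsub : insert l (Finset.Ioi l) ⊆ Finset.Ioi k := by
    intro j hj
    rcases Finset.mem_insert.mp hj with rfl | hj
    · exact Finset.mem_Ioi.mpr hkl
    · exact Finset.mem_Ioi.mpr (hkl.trans (Finset.mem_Ioi.mp hj))
  have htail : delta R l + ∑ j ∈ Finset.Ioi l, delta R j ≤ ∑ j ∈ Finset.Ioi k, delta R j := by
    rw [← Finset.sum_insert (by simp)]
    exact Finset.sum_le_sum_of_subset_of_nonneg hsub fun j _ _ =>
      Finset.sum_nonneg fun i _ => norm_nonneg _
  simp only [adiag]
  linarith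

/-- Diminishing returns property of `F`: if `B` (length `k`) is a prefix of the unimodular
string `A` (length `l ≤ N − 1`), then for any unimodular `u`,
`F(B ⊕ (u)) − F(B) ≥ F(A ⊕ (u)) − F(A)`. -/
theorem stmt_7 (N : ℕ) (R : Matrix (Fin N) (Fin N) ℂ) (hR : R.IsHermitian)
    (k l : ℕ) (hkl : k ≤ l) (hl : l < N)
    (b : Fin N → ℂ) (hb : ∀ i : Fin N, (i : ℕ) < l → ‖b i‖ = 1)
    (u : ℂ) (hu : ‖u‖ = 1) :
    Fval R (l + 1) hl (Function.update b ⟨l, hl⟩ u) - Fval R l hl.le b ≤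
      Fval R (k + 1) (Nat.succ_le_of_lt (hkl.trans_lt hl))
          (Function.update b ⟨k, hkl.trans_lt hl⟩ u) -
        Fval R k (hkl.trans hl.le) b := by
  obtain hlt | rfl := hkl.lt_or_eq
  · have gain_l := abs_le.mp (abs_Fval_update_sub_sub_adiag_le hR hl hb hu)
    have gain_k := abs_le.mp (abs_Fval_update_sub_sub_adiag_le hR (hlt.trans hl)
      (fun i hi => hb i (hi.trans hlt)) hu)
    have windows := adiag_add_two_mul_delta_le R (k := ⟨k, hlt.trans hl⟩) (l := ⟨l, hl⟩) hlt
    linarith [gain_l.1, gain_l.2, gain_k.1, gain_k.2]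
  · exact le_rfl
end

section
/- Suppose R is a 2N-dominant N×N Hermitian matrix, o maximizes s ↦ s^H R s over unimodular vectors with o^H R o ≥ 0, and g is a unimodular vector satisfying g^H R̄ g ≥ (1 − 1/e)(o^H R̄ o) where R̄ is the trace-modified matrix and o also maximizes s^H R̄ s. Then g^H R g ≥ (1 − 1/e + 1/(e(2N+1)))·(o^H R o). -/
open Matrix

/-!
For a unimodular `s` the diagonal of a matrix contributes exactly its trace to `sᴴ M s`, so
`sᴴ R̄ s = sᴴ R s - d` with `d = Tr R - Tr R̄` independent of `s`. The off-diagonal mass of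
the Hermitian `R` is `2 Σ δ_k`, `Tr R̄ ≤ (4N-2) Σ δ_k`, and `2N`-dominance makes
`Tr R ≥ 4N Σ δ_k`; hence `oᴴ R o ≤ Tr R + 2 Σ δ_k ≤ (2N+1) d`. Feeding `d ≥ oᴴ R o / (2N+1)`
into the guarantee `gᴴ R g - d ≥ (1 - 1/e)(oᴴ R o - d)` yields the extra `1/(e(2N+1))`.
-/

section QuadForm

variable {𝕜 n : Type*} [RCLike 𝕜] [Fintype n]

lemma star_mul_self_of_norm_eq_one {z : 𝕜} (hz : ‖z‖ = 1) : star z * z = 1 := by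
  rw [RCLike.star_def, RCLike.conj_mul, hz]
  simp

lemma dotProduct_mulVec_eq_add_sum_diag_sub [DecidableEq n] {M M' : Matrix n n 𝕜}
    (h : ∀ i j, i ≠ j → M' i j = M i j) {s : n → 𝕜} (hs : ∀ i, ‖s i‖ = 1) :
    star s ⬝ᵥ M' *ᵥ s = star s ⬝ᵥ M *ᵥ s + ∑ i, (M' i i - M i i) := by
  have hM' : M' = M + diagonal fun i => M' i i - M i i := by
    ext i j
    by_cases hij : i = j
    · subst hij; simp
    · simp [hij, h i j hij]
  conv_lhs => rw [hM', add_mulVec, dotProduct_add]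
  congr 1
  refine Finset.sum_congr rfl fun i _ => ?_
  rw [mulVec_diagonal, Pi.star_apply, mul_left_comm, star_mul_self_of_norm_eq_one (hs i),
    mul_one]

lemma re_dotProduct_mulVec_le_sum_norm (M : Matrix n n 𝕜) {s : n → 𝕜}
    (hs : ∀ i, ‖s i‖ = 1) :
    RCLike.re (star s ⬝ᵥ M *ᵥ s) ≤ ∑ i, ∑ j, ‖M i j‖ := by
  calc RCLike.re (star s ⬝ᵥ M *ᵥ s)
      ≤ ‖star s ⬝ᵥ M *ᵥ s‖ := RCLike.re_le_norm _
    _ = ‖∑ i, ∑ j, star (s i) * (M i j * s j)‖ := by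
        simp [dotProduct, mulVec, Finset.mul_sum]
    _ ≤ ∑ i, ∑ j, ‖star (s i) * (M i j * s j)‖ :=
        (norm_sum_le _ _).trans (Finset.sum_le_sum fun i _ => norm_sum_le _ _)
    _ = ∑ i, ∑ j, ‖M i j‖ := by simp [hs]

end QuadForm

section TraceModified

variable {N : ℕ} (R : Matrix (Fin N) (Fin N) ℂ)

lemma re_dotProduct_Rbar_mulVec {s : Fin N → ℂ} (hs : ∀ i, ‖s i‖ = 1) :
    (star s ⬝ᵥ Rbar R *ᵥ s).re =
      (star s ⬝ᵥ R *ᵥ s).re - (∑ i, (R i i).re - ∑ i, adiag R i) := by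
  have hoff : ∀ i j, i ≠ j → Rbar R i j = R i j := fun i j hij => if_neg hij
  rw [dotProduct_mulVec_eq_add_sum_diag_sub hoff hs]
  simp only [Rbar, ↓reduceIte, Finset.sum_sub_distrib, Complex.add_re, Complex.sub_re,
    Complex.re_sum, Complex.ofReal_re]
  ring

lemma delta_nonneg (k : Fin N) : 0 ≤ delta R k :=
  Finset.sum_nonneg fun _ _ => norm_nonneg _

lemma sum_adiag_le : ∑ k, adiag R k ≤ (4 * N - 2) * ∑ k, delta R k := by
  have hswap : ∑ k, ∑ j ∈ Finset.Ioi k, delta R j = ∑ j : Fin N, ((j : ℕ) : ℝ) * delta R j := by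
    rw [Finset.sum_comm' (t' := Finset.univ) (s' := Finset.Iio) (by simp)]
    simp [Fin.card_Iio]
  have hidx : ∑ j : Fin N, ((j : ℕ) : ℝ) * delta R j ≤ ∑ j, ((N : ℝ) - 1) * delta R j := by
    refine Finset.sum_le_sum fun j _ => mul_le_mul_of_nonneg_right ?_ (delta_nonneg R j)
    have := j.isLt
    rw [le_sub_iff_add_le]
    exact_mod_cast this
  simp only [adiag, Finset.sum_add_distrib, ← Finset.mul_sum, hswap] at hidx ⊢
  linarith

lemma sum_sum_erase_norm_eq (hR : R.IsHermitian) :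
    ∑ i, ∑ j ∈ Finset.univ.erase i, ‖R i j‖ = 2 * ∑ k, delta R k := by
  have hsplit : ∀ i : Fin N, Finset.univ.erase i = Finset.Iio i ∪ Finset.Ioi i :=
    fun i => by ext j; simp
  have hupper : ∑ i, ∑ j ∈ Finset.Ioi i, ‖R i j‖ = ∑ k, delta R k := by
    rw [Finset.sum_comm' (t' := Finset.univ) (s' := Finset.Iio) (by simp)]
    refine Finset.sum_congr rfl fun j _ => Finset.sum_congr rfl fun i _ => ?_
    rw [← hR.apply i j, norm_star]
  simp only [hsplit, Finset.sum_union (Finset.disjoint_left.2 fun _ h h' =>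
    (Finset.mem_Iio.1 h).not_gt (Finset.mem_Ioi.1 h')), Finset.sum_add_distrib, hupper]
  simp only [delta]
  ring

lemma re_dotProduct_mulVec_le_mul_trace_sub (hR : R.IsHermitian)
    (hdom : ∀ i, 2 * (N : ℝ) * ∑ j ∈ Finset.univ.erase i, ‖R i j‖ ≤ (R i i).re)
    {s : Fin N → ℂ} (hs : ∀ i, ‖s i‖ = 1) :
    (star s ⬝ᵥ R *ᵥ s).re ≤ (2 * N + 1) * (∑ i, (R i i).re - ∑ i, adiag R i) := by
  have hdiag : ∀ i, ‖R i i‖ = (R i i).re := fun i => by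
    rw [← hR.coe_re_apply_self i]
    exact Complex.norm_of_nonneg ((by positivity : (0 : ℝ) ≤ _).trans (hdom i))
  have hnorm : ∑ i, ∑ j, ‖R i j‖ = ∑ i, (R i i).re + 2 * ∑ k, delta R k := by
    have hrow : ∀ i, ∑ j, ‖R i j‖ = (R i i).re + ∑ j ∈ Finset.univ.erase i, ‖R i j‖ :=
      fun i => by
        rw [← hdiag i]
        exact (Finset.add_sum_erase _ (fun j => ‖R i j‖) (Finset.mem_univ i)).symm
    rw [Finset.sum_congr rfl fun i _ => hrow i, Finset.sum_add_distrib,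
      sum_sum_erase_norm_eq R hR]
  have htrace : 4 * N * ∑ k, delta R k ≤ ∑ i, (R i i).re := by
    have := Finset.sum_le_sum fun i (_ : i ∈ Finset.univ) => hdom i
    rw [← Finset.mul_sum, sum_sum_erase_norm_eq R hR] at this
    linarith
  have hS := Finset.sum_nonneg fun k (_ : k ∈ Finset.univ) => delta_nonneg R k
  have hquad : (star s ⬝ᵥ R *ᵥ s).re ≤ _ := re_dotProduct_mulVec_le_sum_norm R hs
  rw [hnorm] at hquad
  -- `(2N+1)(Tr R - (4N-2)S) - (Tr R + 2S) = 2N(Tr R - 4NS)` with `S = Σ δ_k`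
  nlinarith [sum_adiag_le R, (by positivity : (0 : ℝ) ≤ N)]

end TraceModified

lemma mul_le_of_guarantee_of_le_mul_shift {e c a x d : ℝ} (he : 0 < e) (hc : 0 < c)
    (had : a ≤ c * d) (hx : (1 - 1 / e) * (a - d) ≤ x - d) :
    (1 - 1 / e + 1 / (e * c)) * a ≤ x := by
  have : 1 / (e * c) * a ≤ 1 / e * d := by
    rw [one_div_mul_eq_div, div_le_iff₀ (by positivity)]
    calc a ≤ c * d := had
      _ = 1 / e * d * (e * c) := by field_simp
  linarith

theorem stmt_16_general (N : ℕ) (R : Matrix (Fin N) (Fin N) ℂ) (hR : R.IsHermitian)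
    (hdom : ∀ i, 2 * (N : ℝ) * ∑ j ∈ Finset.univ.erase i, ‖R i j‖ ≤ (R i i).re)
    (g o : Fin N → ℂ)
    (hg : ∀ i, ‖g i‖ = 1) (ho : ∀ i, ‖o i‖ = 1)
    (hguar : (1 - 1 / Real.exp 1) * (star o ⬝ᵥ Rbar R *ᵥ o).re ≤
      (star g ⬝ᵥ Rbar R *ᵥ g).re) :
    (1 - 1 / Real.exp 1 + 1 / (Real.exp 1 * (2 * N + 1))) * (star o ⬝ᵥ R *ᵥ o).re ≤
      (star g ⬝ᵥ R *ᵥ g).re := by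
  have hgap := re_dotProduct_mulVec_le_mul_trace_sub R hR hdom ho
  rw [re_dotProduct_Rbar_mulVec R ho, re_dotProduct_Rbar_mulVec R hg] at hguar
  exact mul_le_of_guarantee_of_le_mul_shift (Real.exp_pos 1) (by positivity) hgap hguar

/-- Improved guarantee for `2N`-dominant matrices: if `o` maximizes both `sᴴ R s` and
`sᴴ R̄ s` over unimodular vectors, `oᴴ R o ≥ 0`, and the unimodular `g` satisfies
`gᴴ R̄ g ≥ (1 − 1/e) oᴴ R̄ o`, then `gᴴ R g ≥ (1 − 1/e + 1/(e(2N+1))) oᴴ R o`. -/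
theorem stmt_16 (N : ℕ) (hN : 0 < N) (R : Matrix (Fin N) (Fin N) ℂ) (hR : R.IsHermitian)
    (hdom : ∀ i, 2 * (N : ℝ) * ∑ j ∈ Finset.univ.erase i, ‖R i j‖ ≤ (R i i).re)
    (g o : Fin N → ℂ)
    (hg : ∀ i, ‖g i‖ = 1) (ho : ∀ i, ‖o i‖ = 1)
    (hopt : IsMaxOn (fun s : Fin N → ℂ => (star s ⬝ᵥ R *ᵥ s).re)
      {s : Fin N → ℂ | ∀ i, ‖s i‖ = 1} o)
    (hoptb : IsMaxOn (fun s : Fin N → ℂ => (star s ⬝ᵥ Rbar R *ᵥ s).re)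
      {s : Fin N → ℂ | ∀ i, ‖s i‖ = 1} o)
    (hnn : 0 ≤ (star o ⬝ᵥ R *ᵥ o).re)
    (hguar : (1 - 1 / Real.exp 1) * (star o ⬝ᵥ Rbar R *ᵥ o).re ≤
      (star g ⬝ᵥ Rbar R *ᵥ g).re) :
    (1 - 1 / Real.exp 1 + 1 / (Real.exp 1 * (2 * N + 1))) * (star o ⬝ᵥ R *ᵥ o).re ≤
      (star g ⬝ᵥ R *ᵥ g).re :=
  stmt_16_general N R hR hdom g o hg ho hguar
end
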